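/- Let A and B be n×n normal matrices with empirical spectral distributions F^A and F^B of their eigenvalues (as distributions on ℂ, or on ℝ if the matrices are Hermitian). Then L(F^A, F^B)³ ≤ (1/n) Tr((A - B)(A - B)*), where L denotes the Lévy distance between the distributions. -/

import Mathlib

/-!
For `a ≤ b`, let `W` be the intersection of the span of the eigenvectors of `A` with eigenvalue
`≤ a` and the orthogonal complement of the span of the eigenvectors of `B` with eigenvalue `≤ b`.
Counting dimensions, `dim W ≥ #{λᵢ(A) ≤ a} - #{λᵢ(B) ≤ b}`, and on `W` the quadratic forms are
separated, `⟪w, (B - A) w⟫ ≥ (b - a) ‖w‖²`, so `‖(A - B) w‖ ≥ (b - a) ‖w‖`. Summing over an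
orthonormal basis of `W`, Bessel's inequality applied to the rows of `A - B` gives
`dim W · (b - a)² ≤ ‖A - B‖_F²`. Taking `b - a = ε`, every `ε > 0` with `ε³ ≥ ‖A - B‖_F² / n`
satisfies the Lévy condition.
-/

open Matrix Finset Module Submodule

open scoped InnerProductSpace

section InnerProductSpace

variable {𝕜 E ι : Type*} [RCLike 𝕜] [NormedAddCommGroup E] [InnerProductSpace 𝕜 E] [Fintype ι]

lemma Submodule.finrank_le_finrank_add_finrank_inf_orthogonal [FiniteDimensional 𝕜 E]
    (U V : Submodule 𝕜 E) : finrank 𝕜 U ≤ finrank 𝕜 V + finrank 𝕜 ↥(U ⊓ Vᗮ) := by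
  have h₁ := finrank_sup_add_finrank_inf_eq U Vᗮ
  have h₂ := V.finrank_add_finrank_orthogonal
  have h₃ := (U ⊔ Vᗮ).finrank_le
  omega

namespace OrthonormalBasis

variable (b : OrthonormalBasis ι 𝕜 E) {s : Finset ι} {v : E} {i : ι}

lemma inner_eq_zero_of_mem_span_image (hv : v ∈ span 𝕜 (b '' s)) (hi : i ∉ s) :
    ⟪b i, v⟫_𝕜 = 0 := by
  refine mem_orthogonal_singleton_iff_inner_right.mp (span_le.mpr ?_ hv)
  rintro _ ⟨j, hj, rfl⟩
  exact mem_orthogonal_singleton_iff_inner_right.mpr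
    (b.inner_eq_zero (ne_of_mem_of_not_mem hj hi).symm)

lemma inner_eq_zero_of_mem_orthogonal_span_image (hv : v ∈ (span 𝕜 (b '' s))ᗮ) (hi : i ∈ s) :
    ⟪b i, v⟫_𝕜 = 0 :=
  inner_right_of_mem_orthogonal (subset_span (Set.mem_image_of_mem b hi)) hv

lemma finrank_span_image (s : Finset ι) : finrank 𝕜 (span 𝕜 (b '' s)) = #s := by
  rw [Set.image_eq_range]
  exact (finrank_span_eq_card (b.orthonormal.linearIndependent.comp _ Subtype.val_injective)).trans
    (by simp)

end OrthonormalBasis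

namespace LinearMap.IsSymmetric

variable {T : E →ₗ[𝕜] E} {b : OrthonormalBasis ι 𝕜 E} {μ : ι → ℝ}

lemma inner_apply_eq_mul (hT : T.IsSymmetric) (hb : ∀ i, T (b i) = (μ i : 𝕜) • b i)
    (v : E) (i : ι) : ⟪b i, T v⟫_𝕜 = μ i * ⟪b i, v⟫_𝕜 := by
  rw [← hT, hb, inner_smul_left, RCLike.conj_ofReal]

lemma re_inner_apply_self_eq_sum (hT : T.IsSymmetric) (hb : ∀ i, T (b i) = (μ i : 𝕜) • b i)
    (v : E) : RCLike.re ⟪v, T v⟫_𝕜 = ∑ i, μ i * ‖⟪b i, v⟫_𝕜‖ ^ 2 := by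
  rw [← b.sum_inner_mul_inner v (T v), map_sum]
  refine Finset.sum_congr rfl fun i _ => ?_
  rw [hT.inner_apply_eq_mul hb, mul_left_comm, ← inner_conj_symm, RCLike.conj_mul]
  norm_cast

lemma re_inner_apply_self_le_of_mem_span_image (hT : T.IsSymmetric)
    (hb : ∀ i, T (b i) = (μ i : 𝕜) • b i) {s : Finset ι} {a : ℝ} (hs : ∀ i ∈ s, μ i ≤ a)
    {v : E} (hv : v ∈ span 𝕜 (b '' s)) : RCLike.re ⟪v, T v⟫_𝕜 ≤ a * ‖v‖ ^ 2 := by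
  rw [hT.re_inner_apply_self_eq_sum hb, ← b.sum_sq_norm_inner_right, Finset.mul_sum]
  refine Finset.sum_le_sum fun i _ => ?_
  by_cases hi : i ∈ s
  · exact mul_le_mul_of_nonneg_right (hs i hi) (sq_nonneg _)
  · simp [b.inner_eq_zero_of_mem_span_image hv hi]

lemma le_re_inner_apply_self_of_mem_orthogonal_span_image (hT : T.IsSymmetric)
    (hb : ∀ i, T (b i) = (μ i : 𝕜) • b i) {s : Finset ι} {a : ℝ} (hs : ∀ i ∉ s, a ≤ μ i)
    {v : E} (hv : v ∈ (span 𝕜 (b '' s))ᗮ) :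
    a * ‖v‖ ^ 2 ≤ RCLike.re ⟪v, T v⟫_𝕜 := by
  rw [hT.re_inner_apply_self_eq_sum hb, ← b.sum_sq_norm_inner_right, Finset.mul_sum]
  refine Finset.sum_le_sum fun i _ => ?_
  by_cases hi : i ∈ s
  · simp [b.inner_eq_zero_of_mem_orthogonal_span_image hv hi]
  · exact mul_le_mul_of_nonneg_right (hs i hi) (sq_nonneg _)

end LinearMap.IsSymmetric

end InnerProductSpace

namespace Matrix

variable {𝕜 m n : Type*} [RCLike 𝕜] [Fintype m] [Fintype n]

lemma re_trace_mul_conjTranspose (C : Matrix m n 𝕜) :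
    RCLike.re (C * Cᴴ).trace = ∑ i, ∑ j, ‖C i j‖ ^ 2 := by
  simp [trace, mul_apply, RCLike.mul_conj]

variable [DecidableEq n]

lemma sum_norm_sq_toEuclideanLin_le {ι : Type*} [Fintype ι] (C : Matrix m n 𝕜)
    {v : ι → EuclideanSpace 𝕜 n} (hv : Orthonormal 𝕜 v) :
    ∑ l, ‖toEuclideanLin C (v l)‖ ^ 2 ≤ RCLike.re (C * Cᴴ).trace := by
  let r : m → EuclideanSpace 𝕜 n := fun i => WithLp.toLp 2 (star (C i))
  have hr : ∀ x i, toEuclideanLin C x i = ⟪r i, x⟫_𝕜 := fun x i => by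
    simp [r, EuclideanSpace.inner_eq_star_dotProduct, mulVec, dotProduct_comm]
  calc ∑ l, ‖toEuclideanLin C (v l)‖ ^ 2 = ∑ i, ∑ l, ‖⟪v l, r i⟫_𝕜‖ ^ 2 := by
        simp_rw [EuclideanSpace.norm_sq_eq, hr, norm_inner_symm]
        exact Finset.sum_comm
    _ ≤ ∑ i, ‖r i‖ ^ 2 := Finset.sum_le_sum fun i _ => hv.sum_inner_products_le (r i)
    _ = RCLike.re (C * Cᴴ).trace := by
        simp [re_trace_mul_conjTranspose, EuclideanSpace.norm_sq_eq, r]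

lemma finrank_mul_sq_le_re_trace (C : Matrix m n 𝕜) (W : Submodule 𝕜 (EuclideanSpace 𝕜 n))
    {ε : ℝ} (hε : 0 ≤ ε) (h : ∀ w ∈ W, ε * ‖w‖ ≤ ‖toEuclideanLin C w‖) :
    finrank 𝕜 W * ε ^ 2 ≤ RCLike.re (C * Cᴴ).trace := by
  let b := stdOrthonormalBasis 𝕜 W
  have hv : Orthonormal 𝕜 (W.subtypeₗᵢ ∘ b) := b.orthonormal.comp_linearIsometry _
  calc (finrank 𝕜 W : ℝ) * ε ^ 2 = ∑ _l : Fin (finrank 𝕜 W), ε ^ 2 := by simp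
    _ ≤ ∑ l, ‖toEuclideanLin C (b l)‖ ^ 2 := Finset.sum_le_sum fun l _ => by
        have hl : ‖(b l : EuclideanSpace 𝕜 n)‖ = 1 := hv.1 l
        exact pow_le_pow_left₀ hε (by simpa [hl] using h _ (b l).2) 2
    _ ≤ RCLike.re (C * Cᴴ).trace := sum_norm_sq_toEuclideanLin_le C hv

namespace IsHermitian

variable {A : Matrix n n 𝕜} (hA : A.IsHermitian)

noncomputable def spectralSubspaceIic (a : ℝ) : Submodule 𝕜 (EuclideanSpace 𝕜 n) :=
  span 𝕜 (hA.eigenvectorBasis '' ↑({i | hA.eigenvalues i ≤ a} : Finset n))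

lemma finrank_spectralSubspaceIic (a : ℝ) :
    finrank 𝕜 (hA.spectralSubspaceIic a) = #{i | hA.eigenvalues i ≤ a} :=
  hA.eigenvectorBasis.finrank_span_image _

lemma toEuclideanLin_eigenvectorBasis (i : n) :
    toEuclideanLin A (hA.eigenvectorBasis i) = (hA.eigenvalues i : 𝕜) • hA.eigenvectorBasis i := by
  rw [toEuclideanLin, toLpLin_apply, hA.mulVec_eigenvectorBasis]
  ext j
  simp [RCLike.real_smul_eq_coe_mul]

lemma re_inner_toEuclideanLin_le_of_mem_spectralSubspaceIic {a : ℝ} {v : EuclideanSpace 𝕜 n}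
    (hv : v ∈ hA.spectralSubspaceIic a) : RCLike.re ⟪v, toEuclideanLin A v⟫_𝕜 ≤ a * ‖v‖ ^ 2 :=
  (isSymmetric_toEuclideanLin_iff.mpr hA).re_inner_apply_self_le_of_mem_span_image
    hA.toEuclideanLin_eigenvectorBasis (fun _ hi => (Finset.mem_filter.mp hi).2) hv

lemma le_re_inner_toEuclideanLin_of_mem_orthogonal_spectralSubspaceIic {a : ℝ}
    {v : EuclideanSpace 𝕜 n} (hv : v ∈ (hA.spectralSubspaceIic a)ᗮ) :
    a * ‖v‖ ^ 2 ≤ RCLike.re ⟪v, toEuclideanLin A v⟫_𝕜 :=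
  (isSymmetric_toEuclideanLin_iff.mpr hA).le_re_inner_apply_self_of_mem_orthogonal_span_image
    hA.toEuclideanLin_eigenvectorBasis (fun _ hi => le_of_lt (by simpa using hi)) hv

end IsHermitian

theorem card_eigenvalues_le_sub_mul_sq_le {A B : Matrix n n 𝕜} (hA : A.IsHermitian)
    (hB : B.IsHermitian) {a b : ℝ} (hab : a ≤ b) :
    ((#{i | hA.eigenvalues i ≤ a} : ℝ) - #{i | hB.eigenvalues i ≤ b}) * (b - a) ^ 2 ≤
      RCLike.re ((A - B) * (A - B)ᴴ).trace := by
  set W := hA.spectralSubspaceIic a ⊓ (hB.spectralSubspaceIic b)ᗮ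
  have hdim : (#{i | hA.eigenvalues i ≤ a} : ℝ) - #{i | hB.eigenvalues i ≤ b} ≤ finrank 𝕜 W := by
    have := finrank_le_finrank_add_finrank_inf_orthogonal (hA.spectralSubspaceIic a)
      (hB.spectralSubspaceIic b)
    rw [hA.finrank_spectralSubspaceIic, hB.finrank_spectralSubspaceIic] at this
    rw [sub_le_iff_le_add']
    exact_mod_cast this
  have hsep : ∀ w ∈ W, (b - a) * ‖w‖ ≤ ‖toEuclideanLin (A - B) w‖ := by
    rintro w ⟨hwA, hwB⟩
    rcases eq_or_ne w 0 with rfl | hw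
    · simp
    refine le_of_mul_le_mul_left ?_ (norm_pos_iff.mpr hw)
    calc ‖w‖ * ((b - a) * ‖w‖) = b * ‖w‖ ^ 2 - a * ‖w‖ ^ 2 := by ring
      _ ≤ RCLike.re ⟪w, toEuclideanLin B w⟫_𝕜 - RCLike.re ⟪w, toEuclideanLin A w⟫_𝕜 :=
        sub_le_sub (hB.le_re_inner_toEuclideanLin_of_mem_orthogonal_spectralSubspaceIic hwB)
          (hA.re_inner_toEuclideanLin_le_of_mem_spectralSubspaceIic hwA)
      _ = RCLike.re ⟪w, toEuclideanLin B w - toEuclideanLin A w⟫_𝕜 := by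
        rw [inner_sub_right, map_sub]
      _ ≤ ‖w‖ * ‖toEuclideanLin (A - B) w‖ := by
        rw [map_sub, LinearMap.sub_apply, norm_sub_rev]
        exact (RCLike.re_le_norm _).trans (norm_inner_le_norm _ _)
  calc _ ≤ (finrank 𝕜 W : ℝ) * (b - a) ^ 2 := mul_le_mul_of_nonneg_right hdim (sq_nonneg _)
    _ ≤ _ := finrank_mul_sq_le_re_trace _ W (sub_nonneg.mpr hab) hsep

lemma card_eigenvalues_le_div_sub_le {n : ℕ} {A B : Matrix (Fin n) (Fin n) 𝕜}
    (hA : A.IsHermitian) (hB : B.IsHermitian) {a b : ℝ} (hab : a < b)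
    (h : (1 / n : ℝ) * RCLike.re ((A - B) * (A - B)ᴴ).trace ≤ (b - a) ^ 3) :
    (#{i | hA.eigenvalues i ≤ a} : ℝ) / n - #{i | hB.eigenvalues i ≤ b} / n ≤ b - a := by
  have key := mul_le_mul_of_nonneg_left (card_eigenvalues_le_sub_mul_sq_le hA hB hab.le)
    (one_div_nonneg.mpr n.cast_nonneg)
  rw [← sub_div]
  refine le_of_mul_le_mul_right ?_ (pow_pos (sub_pos.mpr hab) 2)
  rw [div_mul_eq_mul_div, ← one_div_mul_eq_div]
  exact key.trans (h.trans_eq (by ring))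

end Matrix

lemma Real.sInf_pow_le_of_forall_pow_ge {S : Set ℝ} {t : ℝ} {k : ℕ} (hk : k ≠ 0) (ht : 0 ≤ t)
    (hS : ∀ ε ∈ S, 0 ≤ ε) (hmem : ∀ ε > 0, t ≤ ε ^ k → ε ∈ S) : sInf S ^ k ≤ t := by
  set c := t ^ (k⁻¹ : ℝ)
  have hc : 0 ≤ c := Real.rpow_nonneg ht _
  have hck : c ^ k = t := Real.rpow_inv_natCast_pow ht hk
  have hsub : Set.Ioi c ⊆ S := fun ε hε =>
    hmem ε (hc.trans_lt hε) (hck ▸ pow_le_pow_left₀ hc (le_of_lt hε) k)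
  calc sInf S ^ k ≤ c ^ k := pow_le_pow_left₀ (Real.sInf_nonneg hS)
        ((csInf_le_csInf ⟨0, hS⟩ Set.nonempty_Ioi hsub).trans_eq csInf_Ioi) k
    _ = t := hck

theorem levy_distance_cubed_bound_general (n : ℕ)
    (A B : Matrix (Fin n) (Fin n) ℂ) (hA : A.IsHermitian) (hB : B.IsHermitian)
    (FA FB : ℝ → ℝ)
    (hFA : ∀ x, FA x = ((Finset.univ.filter fun i => hA.eigenvalues i ≤ x).card : ℝ) / n)
    (hFB : ∀ x, FB x = ((Finset.univ.filter fun i => hB.eigenvalues i ≤ x).card : ℝ) / n) :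
    (sInf {ε : ℝ | 0 < ε ∧ ∀ x, FA (x - ε) - ε ≤ FB x ∧ FB x ≤ FA (x + ε) + ε}) ^ 3 ≤
      (1 / n : ℝ) * (Matrix.trace ((A - B) * (A - B)ᴴ)).re := by
  have hswap : (B - A) * (B - A)ᴴ = (A - B) * (A - B)ᴴ := by
    rw [← neg_sub, conjTranspose_neg, neg_mul_neg]
  refine Real.sInf_pow_le_of_forall_pow_ge three_ne_zero ?_ (fun ε hε => hε.1.le)
    fun ε hε hcube => ⟨hε, fun x => ⟨?_, ?_⟩⟩
  · rw [← RCLike.re_to_complex, re_trace_mul_conjTranspose]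
    positivity
  · have := card_eigenvalues_le_div_sub_le hA hB (sub_lt_self x hε) (by rwa [sub_sub_cancel])
    rw [sub_sub_cancel] at this
    rw [hFA, hFB]
    linarith
  · have := card_eigenvalues_le_div_sub_le hB hA (lt_add_of_pos_right x hε)
      (by rwa [hswap, add_sub_cancel_left])
    rw [add_sub_cancel_left] at this
    rw [hFA, hFB]
    linarith

/-- Lévy distance bound for empirical spectral distributions of Hermitian matrices:
`L(F^A, F^B)³ ≤ (1/n) Tr((A-B)(A-B)*)`. -/
theorem levy_distance_cubed_bound (n : ℕ) (hn : 0 < n)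
    (A B : Matrix (Fin n) (Fin n) ℂ) (hA : A.IsHermitian) (hB : B.IsHermitian)
    (FA FB : ℝ → ℝ)
    (hFA : ∀ x, FA x = ((Finset.univ.filter fun i => hA.eigenvalues i ≤ x).card : ℝ) / n)
    (hFB : ∀ x, FB x = ((Finset.univ.filter fun i => hB.eigenvalues i ≤ x).card : ℝ) / n) :
    (sInf {ε : ℝ | 0 < ε ∧ ∀ x, FA (x - ε) - ε ≤ FB x ∧ FB x ≤ FA (x + ε) + ε}) ^ 3 ≤
      (1 / n : ℝ) * (Matrix.trace ((A - B) * (A - B)ᴴ)).re :=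
  levy_distance_cubed_bound_general n A B hA hB FA FB hFA hFB
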